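/- For every integer r ≥ 3 and n = 2r-3, ∑_{j≥0} (-1)^j * C(n,j) * C(n+r-2-2j, n-1) = ∑_{j≥0} (-1)^j * C(n,j) * C(n+r-3-2j, n-1), where C denotes the binomial coefficient with the convention C(a,b)=0 when a<b. -/

import Mathlib

/-!
Comparing coefficients of `X ^ m` in `(1 - X²)ⁿ · (1 - X)⁻ⁿ = (1 + X)ⁿ` gives
`∑ⱼ (-1)ʲ C(n,j) C(n-1+m-2j, n-1) = C(n,m)`. The two sums are therefore `C(n, r-1)` and
`C(n, r-2)`, which agree because `n = (r-1) + (r-2)`.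
-/

open PowerSeries Finset

namespace PowerSeries

variable {R : Type*} [CommRing R]

theorem coeff_one_add_X_pow (n k : ℕ) : coeff k ((1 + X : R⟦X⟧) ^ n) = n.choose k := by
  rw [← Polynomial.coe_X, ← Polynomial.coe_one, ← Polynomial.coe_add, ← Polynomial.coe_pow,
    Polynomial.coeff_coe, Polynomial.coeff_one_add_X_pow]

theorem one_sub_X_sq_pow_eq_sum (n : ℕ) :
    (1 - X ^ 2 : R⟦X⟧) ^ n = ∑ j ∈ range (n + 1), C ((-1) ^ j * n.choose j : R) * X ^ (2 * j) := by
  rw [sub_eq_add_neg, add_comm, add_pow]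
  refine sum_congr rfl fun j _ => ?_
  rw [neg_pow, one_pow, mul_one, pow_mul, map_mul, map_pow, map_neg, map_one, map_natCast]
  ring

theorem one_sub_X_sq_pow_mul_invOneSubPow (n : ℕ) :
    (1 - X ^ 2 : R⟦X⟧) ^ n * (invOneSubPow R n).val = (1 + X) ^ n := by
  rw [show (1 - X ^ 2 : R⟦X⟧) = (1 + X) * (1 - X) by ring, mul_pow, mul_assoc,
    ← invOneSubPow_inv_eq_one_sub_pow, Units.inv_val, mul_one]

/-- For `m < i` the truncated subtraction leaves a top index below `n - 1 ≥ 1`, so the right-hand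
side vanishes like the left. -/
theorem coeff_X_pow_mul_invOneSubPow {n : ℕ} (hn : 2 ≤ n) (m i : ℕ) :
    coeff m (X ^ i * (invOneSubPow R n).val) = ((n - 1 + m - i).choose (n - 1) : R) := by
  rw [mul_comm, coeff_mul_X_pow', invOneSubPow_val_eq_mk_sub_one_add_choose_of_pos _ _ (by omega)]
  split_ifs with h
  · rw [coeff_mk, Nat.add_sub_assoc h]
  · rw [Nat.choose_eq_zero_of_lt (by omega), Nat.cast_zero]

end PowerSeries

theorem sum_neg_one_pow_mul_choose_mul_choose_sub_two_mul {n : ℕ} (hn : 2 ≤ n) (m : ℕ) :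
    ∑ j ∈ range (n + 1), (-1 : ℤ) ^ j * n.choose j * (n - 1 + m - 2 * j).choose (n - 1) =
      n.choose m := by
  have hcoeff := congrArg (coeff m) (one_sub_X_sq_pow_mul_invOneSubPow (R := ℤ) n)
  rw [coeff_one_add_X_pow, one_sub_X_sq_pow_eq_sum, sum_mul, map_sum] at hcoeff
  rw [← hcoeff]
  refine sum_congr rfl fun j _ => ?_
  rw [mul_assoc (C _), coeff_C_mul, coeff_X_pow_mul_invOneSubPow hn, mul_assoc]

/-- For `r ≥ 3` and `n = 2r-3`, the two alternating binomial sums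
`∑_j (-1)^j C(n,j) C(n+r-2-2j, n-1)` and `∑_j (-1)^j C(n,j) C(n+r-3-2j, n-1)` coincide
(equality of the Hilbert function values of a generic codimension-2 subspace arrangement
and of its generic hyperplane section in degree `n-1`). -/
theorem alternating_sums_choose_eq (r n : ℕ) (hr : 3 ≤ r) (hn : n = 2 * r - 3) :
    ∑ j ∈ Finset.range (n + 1),
        (-1 : ℤ) ^ j * (n.choose j : ℤ) * ((n + r - 2 - 2 * j).choose (n - 1) : ℤ) =
      ∑ j ∈ Finset.range (n + 1),
        (-1 : ℤ) ^ j * (n.choose j : ℤ) * ((n + r - 3 - 2 * j).choose (n - 1) : ℤ) := by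
  have hn2 : 2 ≤ n := by omega
  rw [show n + r - 2 = n - 1 + (r - 1) by omega, show n + r - 3 = n - 1 + (r - 2) by omega,
    sum_neg_one_pow_mul_choose_mul_choose_sub_two_mul hn2,
    sum_neg_one_pow_mul_choose_mul_choose_sub_two_mul hn2,
    Nat.choose_symm_of_eq_add (by omega : n = (r - 1) + (r - 2))]
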